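/- arXiv:2604.21632 — 5 statements merged into one kernel-verified Lean document; each statement's English description precedes it below -/
import Mathlib

section
/- Consider a softmax classifier over K classes: given a feature vector φ ∈ ℝ^d and weight rows W_1,…,W_K ∈ ℝ^d, the probability of class k is p(k | φ, W) = exp(φᵀW_k) / Σ_{l=1}^K exp(φᵀW_l). Fix a dataset of N examples with labels y_1,…,y_N ∈ {1,…,K}, and for each training step t let φ_n^t ∈ ℝ^d denote the feature vector of example n at step t, satisfying ‖φ_n^t‖ ≤ r for all n and t. The weights are updated by ℓ2-regularized gradient descent with learning rate η_t ≥ 0 and regularization coefficient λ > 0: W_k^{(t+1)} = W_k^{(t)} − η_t [ (1/N) Σ_{n=1}^N (p(k | φ_n^t, W^{(t)}) − 1[y_n = k]) φ_n^t + λ W_k^{(t)} ]. Suppose labels i and j are not present in the data, i.e., y_n ≠ i and y_n ≠ j for all n ∈ {1,…,N}, and suppose λ η_t ≤ 1. Then ‖W_j^{(t+1)} − W_i^{(t+1)}‖ ≤ (1 − λ η_t + η_t r² p_t) ‖W_j^{(t)} − W_i^{(t)}‖, where p_t = max over k ∈ {i, j} and n ∈ {1,…,N} of p(k | φ_n^t,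 W^{(t)}). -/
open scoped RealInnerProductSpace BigOperators

/-- Softmax probability of class `k` given feature vector `φ` and weight rows `W`. -/
noncomputable def softmaxProb {d K : ℕ} (W : Fin K → EuclideanSpace ℝ (Fin d))
    (φ : EuclideanSpace ℝ (Fin d)) (k : Fin K) : ℝ :=
  Real.exp ⟪φ, W k⟫ / ∑ l, Real.exp ⟪φ, W l⟫

lemma exp_abs_sub_le (a b : ℝ) :
    |Real.exp a - Real.exp b| ≤ max (Real.exp a) (Real.exp b) * |a - b| := by
  rcases le_total a b with h | h
  · rw [abs_sub_comm, abs_of_nonneg (sub_nonneg.2 (Real.exp_le_exp.2 h)),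
      abs_of_nonpos (sub_nonpos.2 h)]
    have h1 : Real.exp a = Real.exp b * Real.exp (a - b) := by
      rw [← Real.exp_add]; ring_nf
    have h2 := Real.add_one_le_exp (a - b)
    have h3 := (Real.exp_pos b).le
    have h4 : Real.exp b ≤ max (Real.exp a) (Real.exp b) := le_max_right _ _
    nlinarith [mul_nonneg h3 (sub_nonneg.2 h2)]
  · rw [abs_of_nonneg (sub_nonneg.2 (Real.exp_le_exp.2 h)),
      abs_of_nonneg (sub_nonneg.2 h)]
    have h1 : Real.exp b = Real.exp a * Real.exp (b - a) := by
      rw [← Real.exp_add]; ring_nf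
    have h2 := Real.add_one_le_exp (b - a)
    have h3 := (Real.exp_pos a).le
    have h4 : Real.exp a ≤ max (Real.exp a) (Real.exp b) := le_max_left _ _
    nlinarith [mul_nonneg h3 (sub_nonneg.2 h2)]

/-- Lemma 1: one step of ℓ2-regularized gradient descent contracts the distance between
the softmax weight rows of two labels `i`, `j` that do not appear in the data. -/
theorem unseen_label_weight_contraction
    {d K N : ℕ} (hN : 0 < N)
    (y : Fin N → Fin K)
    (φ : ℕ → Fin N → EuclideanSpace ℝ (Fin d))
    (r : ℝ) (hr : ∀ t n, ‖φ t n‖ ≤ r)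
    (η : ℕ → ℝ) (hη : ∀ t, 0 ≤ η t)
    (lam : ℝ) (hlam : 0 < lam)
    (W : ℕ → Fin K → EuclideanSpace ℝ (Fin d))
    (hupd : ∀ t k, W (t + 1) k =
      W t k - η t • ((N : ℝ)⁻¹ •
        ∑ n, (softmaxProb (W t) (φ t n) k - if y n = k then (1 : ℝ) else 0) • φ t n
        + lam • W t k))
    (i j : Fin K) (hi : ∀ n, y n ≠ i) (hj : ∀ n, y n ≠ j)
    (t : ℕ) (hlamη : lam * η t ≤ 1)
    (pt : ℝ)
    (hpt : IsGreatest {x : ℝ | ∃ n : Fin N,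
      x = softmaxProb (W t) (φ t n) i ∨ x = softmaxProb (W t) (φ t n) j} pt) :
    ‖W (t + 1) j - W (t + 1) i‖ ≤
      (1 - lam * η t + η t * r ^ 2 * pt) * ‖W t j - W t i‖ := by
  set D := W t j - W t i with hD
  set p : Fin K → Fin N → ℝ := fun k n => softmaxProb (W t) (φ t n) k with hp
  obtain ⟨n0⟩ : Nonempty (Fin N) := ⟨⟨0, hN⟩⟩
  have hr0 : 0 ≤ r := le_trans (norm_nonneg _) (hr t n0)
  -- Z positivity
  have hZpos : ∀ n : Fin N, 0 < ∑ l, Real.exp ⟪φ t n, W t l⟫ := by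
    intro n
    exact Finset.sum_pos (fun l _ => Real.exp_pos _) ⟨i, Finset.mem_univ i⟩
  have hpt0 : 0 ≤ pt := by
    obtain ⟨n, hn⟩ := hpt.1
    have : 0 ≤ softmaxProb (W t) (φ t n) i ∧ 0 ≤ softmaxProb (W t) (φ t n) j := by
      constructor <;> exact div_nonneg (Real.exp_pos _).le (hZpos n).le
    rcases hn with h | h <;> rw [h]
    exacts [this.1, this.2]
  -- key per-example bound
  have key : ∀ n : Fin N, |p j n - p i n| ≤ pt * (r * ‖D‖) := by
    intro n
    have hZ := hZpos n
    have hdiff : p j n - p i n =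
        (Real.exp ⟪φ t n, W t j⟫ - Real.exp ⟪φ t n, W t i⟫) /
          (∑ l, Real.exp ⟪φ t n, W t l⟫) := by
      simp only [hp, softmaxProb, div_sub_div_same]
    have h1 : |p j n - p i n| ≤
        max (p j n) (p i n) * |⟪φ t n, W t j⟫ - ⟪φ t n, W t i⟫| := by
      rw [hdiff, abs_div, abs_of_pos hZ, div_le_iff₀ hZ]
      have hbd := exp_abs_sub_le ⟪φ t n, W t j⟫ ⟪φ t n, W t i⟫
      have hmax : max (p j n) (p i n) * (∑ l, Real.exp ⟪φ t n, W t l⟫) =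
          max (Real.exp ⟪φ t n, W t j⟫) (Real.exp ⟪φ t n, W t i⟫) := by
        simp only [hp, softmaxProb]
        rw [max_div_div_right hZ.le, div_mul_cancel₀ _ hZ.ne']
      calc |Real.exp ⟪φ t n, W t j⟫ - Real.exp ⟪φ t n, W t i⟫|
          ≤ max (Real.exp ⟪φ t n, W t j⟫) (Real.exp ⟪φ t n, W t i⟫) *
            |⟪φ t n, W t j⟫ - ⟪φ t n, W t i⟫| := hbd
        _ = max (p j n) (p i n) * |⟪φ t n, W t j⟫ - ⟪φ t n, W t i⟫| *
            (∑ l, Real.exp ⟪φ t n, W t l⟫) := by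
            rw [mul_right_comm, hmax]
    have hmaxpt : max (p j n) (p i n) ≤ pt :=
      max_le (hpt.2 ⟨n, Or.inr rfl⟩) (hpt.2 ⟨n, Or.inl rfl⟩)
    have hinner : |⟪φ t n, W t j⟫ - ⟪φ t n, W t i⟫| ≤ r * ‖D‖ := by
      rw [← inner_sub_right]
      calc |⟪φ t n, D⟫| ≤ ‖φ t n‖ * ‖D‖ := abs_real_inner_le_norm _ _
        _ ≤ r * ‖D‖ := mul_le_mul_of_nonneg_right (hr t n) (norm_nonneg _)
    calc |p j n - p i n| ≤ max (p j n) (p i n) * |⟪φ t n, W t j⟫ - ⟪φ t n, W t i⟫| := h1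
      _ ≤ pt * (r * ‖D‖) := mul_le_mul hmaxpt hinner (abs_nonneg _) hpt0
  -- algebraic identity
  have hident : W (t + 1) j - W (t + 1) i =
      (1 - η t * lam) • D - (η t * (N : ℝ)⁻¹) • ∑ n, (p j n - p i n) • φ t n := by
    rw [hupd t j, hupd t i]
    have hsum : ∀ (k : Fin K), (∀ n, y n ≠ k) →
        (∑ n, (softmaxProb (W t) (φ t n) k - if y n = k then (1 : ℝ) else 0) • φ t n)
          = ∑ n, p k n • φ t n := by
      intro k hk
      refine Finset.sum_congr rfl fun n _ => ?_
      rw [if_neg (hk n), sub_zero]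
    rw [hsum j hj, hsum i hi]
    have hsplit : (∑ n, (p j n - p i n) • φ t n)
        = (∑ n, p j n • φ t n) - ∑ n, p i n • φ t n := by
      rw [← Finset.sum_sub_distrib]
      exact Finset.sum_congr rfl fun n _ => sub_smul _ _ _
    rw [hsplit, hD]
    module
  rw [hident]
  have hstep1 : ‖(1 - η t * lam) • D - (η t * (N : ℝ)⁻¹) • ∑ n, (p j n - p i n) • φ t n‖
      ≤ ‖(1 - η t * lam) • D‖ + ‖(η t * (N : ℝ)⁻¹) • ∑ n, (p j n - p i n) • φ t n‖ :=
    norm_sub_le _ _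
  have hetalam : 0 ≤ η t * lam := mul_nonneg (hη t) hlam.le
  have h1n : ‖(1 - η t * lam) • D‖ = (1 - η t * lam) * ‖D‖ := by
    rw [norm_smul, Real.norm_eq_abs, abs_of_nonneg]
    nlinarith [hlamη]
  have hNpos : (0 : ℝ) < (N : ℝ) := by exact_mod_cast hN
  have h2n : ‖(η t * (N : ℝ)⁻¹) • ∑ n, (p j n - p i n) • φ t n‖
      ≤ (η t * (N : ℝ)⁻¹) * ((N : ℝ) * (pt * (r * ‖D‖) * r)) := by
    rw [norm_smul, Real.norm_eq_abs, abs_of_nonneg (mul_nonneg (hη t) (inv_nonneg.2 hNpos.le))]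
    refine mul_le_mul_of_nonneg_left ?_ (mul_nonneg (hη t) (inv_nonneg.2 hNpos.le))
    calc ‖∑ n, (p j n - p i n) • φ t n‖ ≤ ∑ n, ‖(p j n - p i n) • φ t n‖ :=
          norm_sum_le _ _
      _ ≤ ∑ _n : Fin N, pt * (r * ‖D‖) * r := by
          refine Finset.sum_le_sum fun n _ => ?_
          rw [norm_smul, Real.norm_eq_abs]
          exact mul_le_mul (key n) (hr t n) (norm_nonneg _)
            (mul_nonneg hpt0 (mul_nonneg hr0 (norm_nonneg _)))
      _ = (N : ℝ) * (pt * (r * ‖D‖) * r) := by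
          rw [Finset.sum_const, Finset.card_univ, Fintype.card_fin, nsmul_eq_mul]
  calc ‖(1 - η t * lam) • D - (η t * (N : ℝ)⁻¹) • ∑ n, (p j n - p i n) • φ t n‖
      ≤ (1 - η t * lam) * ‖D‖ + (η t * (N : ℝ)⁻¹) * ((N : ℝ) * (pt * (r * ‖D‖) * r)) := by
        rw [← h1n]; exact le_trans hstep1 (add_le_add (le_refl _) h2n)
    _ = (1 - lam * η t + η t * r ^ 2 * pt) * ‖D‖ := by
        field_simp
end

section
/- Consider a softmax classifier over K classes: given a feature vector φ ∈ ℝ^d and weight rows W_1,…,W_K ∈ ℝ^d, the probability of class k is p(k | φ, W) = exp(φᵀW_k) / Σ_{l=1}^K exp(φᵀW_l). Fix a dataset of N examples with labels y_1,…,y_N and, at step t, features φ_n^t ∈ ℝ^d with ‖φ_n^t‖ ≤ r. Suppose the weights are updated by ℓ2-regularized stochastic gradient descent on a nonempty minibatch B_t ⊆ {1,…,N}: W_k^{(t+1)} = W_k^{(t)} − η_t [ (1/|B_t|) Σ_{n ∈ B_t} (p(k | φ_n^t, W^{(t)}) − 1[y_n = k]) φ_n^t + λ W_k^{(t)} ],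 with η_t ≥ 0, λ > 0, and λ η_t ≤ 1. If labels i and j satisfy y_n ≠ i and y_n ≠ j for all n ∈ B_t, then ‖W_j^{(t+1)} − W_i^{(t+1)}‖ ≤ (1 − λ η_t + η_t r² p_t) ‖W_j^{(t)} − W_i^{(t)}‖, where p_t = max over k ∈ {i, j} and n ∈ B_t of p(k | φ_n^t, W^{(t)}). -/
open scoped RealInnerProductSpace BigOperators

lemma softmax_nonneg {d K : ℕ} [NeZero K] (W : Fin K → EuclideanSpace ℝ (Fin d))
    (φ : EuclideanSpace ℝ (Fin d)) (k : Fin K) : 0 ≤ softmaxProb W φ k := by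
  unfold softmaxProb
  apply div_nonneg (Real.exp_nonneg _)
  exact Finset.sum_nonneg fun l _ => Real.exp_nonneg _

lemma softmax_diff_le {d K : ℕ} [NeZero K] (W : Fin K → EuclideanSpace ℝ (Fin d))
    (φ : EuclideanSpace ℝ (Fin d)) (i j : Fin K) :
    |softmaxProb W φ j - softmaxProb W φ i| ≤
      max (softmaxProb W φ i) (softmaxProb W φ j) * (‖φ‖ * ‖W j - W i‖) := by
  have hZ : 0 < ∑ l, Real.exp ⟪φ, W l⟫ :=
    Finset.sum_pos (fun l _ => Real.exp_pos _) ⟨⟨0, Nat.pos_of_ne_zero (NeZero.ne K)⟩, Finset.mem_univ _⟩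
  unfold softmaxProb
  rw [div_sub_div_same, abs_div, abs_of_pos hZ, div_le_iff₀ hZ]
  have h1 := exp_abs_sub_le ⟪φ, W j⟫ ⟪φ, W i⟫
  have h2 : |⟪φ, W j⟫ - ⟪φ, W i⟫| ≤ ‖φ‖ * ‖W j - W i‖ := by
    rw [← inner_sub_right]
    exact abs_real_inner_le_norm _ _
  have hmax : max (Real.exp ⟪φ, W i⟫ / (∑ l, Real.exp ⟪φ, W l⟫))
      (Real.exp ⟪φ, W j⟫ / (∑ l, Real.exp ⟪φ, W l⟫)) * (∑ l, Real.exp ⟪φ, W l⟫)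
      = max (Real.exp ⟪φ, W j⟫) (Real.exp ⟪φ, W i⟫) := by
    rw [max_div_div_right hZ.le, div_mul_cancel₀ _ hZ.ne', max_comm]
  calc |Real.exp ⟪φ, W j⟫ - Real.exp ⟪φ, W i⟫|
      ≤ max (Real.exp ⟪φ, W j⟫) (Real.exp ⟪φ, W i⟫) * |⟪φ, W j⟫ - ⟪φ, W i⟫| := h1
    _ ≤ max (Real.exp ⟪φ, W j⟫) (Real.exp ⟪φ, W i⟫) * (‖φ‖ * ‖W j - W i‖) := by
        apply mul_le_mul_of_nonneg_left h2 (le_max_iff.2 (Or.inl (Real.exp_nonneg _)))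
    _ = _ := by rw [← hmax]; ring

/-- SGD version of Lemma 1: one step of ℓ2-regularized stochastic gradient descent on a
nonempty minibatch `B t` contracts the distance between the softmax weight rows of two
labels `i`, `j` that do not appear in the minibatch. -/
theorem unseen_label_weight_contraction_sgd
    {d K N : ℕ}
    (y : Fin N → Fin K)
    (φ : ℕ → Fin N → EuclideanSpace ℝ (Fin d))
    (r : ℝ) (hr : ∀ t n, ‖φ t n‖ ≤ r)
    (η : ℕ → ℝ) (hη : ∀ t, 0 ≤ η t)
    (lam : ℝ) (hlam : 0 < lam)
    (B : ℕ → Finset (Fin N)) (hB : ∀ t, (B t).Nonempty)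
    (W : ℕ → Fin K → EuclideanSpace ℝ (Fin d))
    (hupd : ∀ t k, W (t + 1) k =
      W t k - η t • (((B t).card : ℝ)⁻¹ •
        ∑ n ∈ B t, (softmaxProb (W t) (φ t n) k - if y n = k then (1 : ℝ) else 0) • φ t n
        + lam • W t k))
    (i j : Fin K)
    (t : ℕ) (hi : ∀ n ∈ B t, y n ≠ i) (hj : ∀ n ∈ B t, y n ≠ j)
    (hlamη : lam * η t ≤ 1)
    (pt : ℝ)
    (hpt : IsGreatest {x : ℝ | ∃ n ∈ B t,
      x = softmaxProb (W t) (φ t n) i ∨ x = softmaxProb (W t) (φ t n) j} pt) :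
    ‖W (t + 1) j - W (t + 1) i‖ ≤
      (1 - lam * η t + η t * r ^ 2 * pt) * ‖W t j - W t i‖ := by
  haveI : NeZero K := NeZero.of_pos i.pos
  obtain ⟨n0, hn0⟩ := hB t
  have hr0 : 0 ≤ r := le_trans (norm_nonneg _) (hr t n0)
  have hpt0 : 0 ≤ pt := by
    obtain ⟨n, hn, h | h⟩ := hpt.1 <;> rw [h] <;> exact softmax_nonneg _ _ _
  have hcard : (0:ℝ) < ((B t).card : ℝ) := by
    exact_mod_cast Finset.card_pos.2 ⟨n0, hn0⟩
  set Δ := W t j - W t i with hΔ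
  set T := ∑ n ∈ B t,
      (softmaxProb (W t) (φ t n) j - softmaxProb (W t) (φ t n) i) • φ t n with hT
  have key : W (t+1) j - W (t+1) i
      = (1 - lam * η t) • Δ - (η t * (((B t).card : ℝ))⁻¹) • T := by
    rw [hupd t j, hupd t i]
    have hsj : ∑ n ∈ B t,
        (softmaxProb (W t) (φ t n) j - if y n = j then (1:ℝ) else 0) • φ t n
        = ∑ n ∈ B t, (softmaxProb (W t) (φ t n) j) • φ t n :=
      Finset.sum_congr rfl fun n hn => by rw [if_neg (hj n hn), sub_zero]
    have hsi : ∑ n ∈ B t,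
        (softmaxProb (W t) (φ t n) i - if y n = i then (1:ℝ) else 0) • φ t n
        = ∑ n ∈ B t, (softmaxProb (W t) (φ t n) i) • φ t n :=
      Finset.sum_congr rfl fun n hn => by rw [if_neg (hi n hn), sub_zero]
    have hTsplit : T = (∑ n ∈ B t, (softmaxProb (W t) (φ t n) j) • φ t n)
        - ∑ n ∈ B t, (softmaxProb (W t) (φ t n) i) • φ t n := by
      rw [hT, ← Finset.sum_sub_distrib]
      exact Finset.sum_congr rfl fun n _ => sub_smul _ _ _
    rw [hsj, hsi, hΔ, hTsplit]
    module
  have hTbound : ‖T‖ ≤ ((B t).card : ℝ) * (pt * r ^ 2 * ‖Δ‖) := by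
    calc ‖T‖ ≤ ∑ n ∈ B t,
          ‖(softmaxProb (W t) (φ t n) j - softmaxProb (W t) (φ t n) i) • φ t n‖ :=
        norm_sum_le _ _
      _ ≤ ∑ _n ∈ B t, pt * r ^ 2 * ‖Δ‖ := by
        apply Finset.sum_le_sum
        intro n hn
        rw [norm_smul, Real.norm_eq_abs]
        have h1 := softmax_diff_le (W t) (φ t n) i j
        rw [← hΔ] at h1
        have hmax : max (softmaxProb (W t) (φ t n) i) (softmaxProb (W t) (φ t n) j) ≤ pt :=
          max_le (hpt.2 ⟨n, hn, Or.inl rfl⟩) (hpt.2 ⟨n, hn, Or.inr rfl⟩)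
        have hφ := hr t n
        have hφ0 := norm_nonneg (φ t n)
        have hΔ0 := norm_nonneg Δ
        have hmax0 : 0 ≤ max (softmaxProb (W t) (φ t n) i) (softmaxProb (W t) (φ t n) j) :=
          le_max_iff.2 (Or.inl (softmax_nonneg _ _ _))
        have h2 : |softmaxProb (W t) (φ t n) j - softmaxProb (W t) (φ t n) i|
            ≤ pt * (r * ‖Δ‖) := le_trans h1
          (mul_le_mul hmax (mul_le_mul_of_nonneg_right hφ hΔ0)
            (mul_nonneg hφ0 hΔ0) hpt0)
        have h3 := abs_nonneg (softmaxProb (W t) (φ t n) j - softmaxProb (W t) (φ t n) i)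
        nlinarith [mul_le_mul h2 hφ hφ0 (by positivity : (0:ℝ) ≤ pt * (r * ‖Δ‖))]
      _ = ((B t).card : ℝ) * (pt * r ^ 2 * ‖Δ‖) := by
        rw [Finset.sum_const, nsmul_eq_mul]
  calc ‖W (t+1) j - W (t+1) i‖
      = ‖(1 - lam * η t) • Δ - (η t * (((B t).card : ℝ))⁻¹) • T‖ := by rw [key]
    _ ≤ ‖(1 - lam * η t) • Δ‖ + ‖(η t * (((B t).card : ℝ))⁻¹) • T‖ := norm_sub_le _ _
    _ = (1 - lam * η t) * ‖Δ‖ + (η t * (((B t).card : ℝ))⁻¹) * ‖T‖ := by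
        rw [norm_smul, norm_smul, Real.norm_eq_abs, Real.norm_eq_abs,
          abs_of_nonneg (by linarith : (0:ℝ) ≤ 1 - lam * η t),
          abs_of_nonneg (mul_nonneg (hη t) (inv_nonneg.2 hcard.le))]
    _ ≤ (1 - lam * η t) * ‖Δ‖ + (η t * (((B t).card : ℝ))⁻¹) *
          (((B t).card : ℝ) * (pt * r ^ 2 * ‖Δ‖)) := by
        have := mul_nonneg (hη t) (inv_nonneg.2 hcard.le)
        nlinarith
    _ = (1 - lam * η t + η t * r ^ 2 * pt) * ‖Δ‖ := by
        field_simp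
end

section
/- Consider a softmax classifier over K classes: given a feature vector φ ∈ ℝ^d and weight rows W_1,…,W_K ∈ ℝ^d, the probability of class k is p(k | φ, W) = exp(φᵀW_k) / Σ_{l=1}^K exp(φᵀW_l). Let φ_1,…,φ_N ∈ ℝ^d satisfy ‖φ_n‖ ≤ r for all n, let W_1,…,W_K be weight rows, fix classes i, j, and set p = max over k ∈ {i, j} and n ∈ {1,…,N} of p(k | φ_n, W). Then ‖ (1/N) Σ_{n=1}^N ( p(j | φ_n, W) − p(i | φ_n, W) ) φ_n ‖ ≤ r² p ‖W_j − W_i‖. -/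
open scoped RealInnerProductSpace BigOperators

lemma abs_exp_sub_exp_le (x y : ℝ) :
    |Real.exp x - Real.exp y| ≤ max (Real.exp x) (Real.exp y) * |x - y| := by
  wlog h : y ≤ x generalizing x y
  · have := this y x (le_of_not_ge h)
    rwa [abs_sub_comm, abs_sub_comm y x, max_comm] at this
  rw [abs_of_nonneg (by simp [Real.exp_le_exp, h] : (0:ℝ) ≤ _),
    abs_of_nonneg (sub_nonneg.2 h), max_eq_left (Real.exp_le_exp.2 h)]
  have h1 : Real.exp y = Real.exp x * Real.exp (y - x) := by
    rw [← Real.exp_add]; ring_nf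
  rw [h1]
  have h2 : 1 - Real.exp (y - x) ≤ x - y := by
    have := Real.add_one_le_exp (y - x)
    linarith
  calc Real.exp x - Real.exp x * Real.exp (y - x)
      = Real.exp x * (1 - Real.exp (y - x)) := by ring
    _ ≤ Real.exp x * (x - y) := by
        exact mul_le_mul_of_nonneg_left h2 (Real.exp_pos x).le

/-- Averaged bound from the final step of the proof of Lemma 1: the norm of the averaged
weighted feature sum is at most `r² p ‖W j − W i‖`, where `p` is the maximal softmax
probability of classes `i`, `j` over the examples. -/
theorem softmax_difference_average_bound
    {d K N : ℕ}
    (φ : Fin N → EuclideanSpace ℝ (Fin d))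
    (r : ℝ) (hr : ∀ n, ‖φ n‖ ≤ r)
    (W : Fin K → EuclideanSpace ℝ (Fin d))
    (i j : Fin K)
    (p : ℝ)
    (hp : IsGreatest {x : ℝ | ∃ n : Fin N,
      x = softmaxProb W (φ n) i ∨ x = softmaxProb W (φ n) j} p) :
    ‖(N : ℝ)⁻¹ • ∑ n, (softmaxProb W (φ n) j - softmaxProb W (φ n) i) • φ n‖ ≤
      r ^ 2 * p * ‖W j - W i‖ := by
  obtain ⟨n0, hn0⟩ := hp.1
  have hr0 : 0 ≤ r := le_trans (norm_nonneg _) (hr n0)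
  have hSpos : ∀ n, 0 < ∑ l, Real.exp ⟪φ n, W l⟫ := fun n =>
    Finset.sum_pos (fun l _ => Real.exp_pos _) ⟨i, Finset.mem_univ i⟩
  have hprob_nonneg : ∀ n k, 0 ≤ softmaxProb W (φ n) k := fun n k =>
    div_nonneg (Real.exp_pos _).le (hSpos n).le
  have hp0 : 0 ≤ p := by
    rcases hn0 with h | h <;> rw [h] <;> exact hprob_nonneg n0 _
  -- pointwise bound
  have key : ∀ n, |softmaxProb W (φ n) j - softmaxProb W (φ n) i| ≤
      p * (r * ‖W j - W i‖) := by
    intro n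
    have hS := hSpos n
    have hij : softmaxProb W (φ n) j - softmaxProb W (φ n) i =
        (Real.exp ⟪φ n, W j⟫ - Real.exp ⟪φ n, W i⟫) / ∑ l, Real.exp ⟪φ n, W l⟫ := by
      unfold softmaxProb; rw [sub_div]
    rw [hij, abs_div, abs_of_pos hS]
    have h1 := abs_exp_sub_exp_le ⟪φ n, W j⟫ ⟪φ n, W i⟫
    have hmax : max (Real.exp ⟪φ n, W j⟫) (Real.exp ⟪φ n, W i⟫) / (∑ l, Real.exp ⟪φ n, W l⟫)
        ≤ p := by
      rcases max_cases (Real.exp ⟪φ n, W j⟫) (Real.exp ⟪φ n, W i⟫) with ⟨h, _⟩ | ⟨h, _⟩ <;> rw [h]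
      · exact hp.2 ⟨n, Or.inr rfl⟩
      · exact hp.2 ⟨n, Or.inl rfl⟩
    have hinner : |⟪φ n, W j⟫ - ⟪φ n, W i⟫| ≤ r * ‖W j - W i‖ := by
      rw [← inner_sub_right]
      calc |⟪φ n, W j - W i⟫| ≤ ‖φ n‖ * ‖W j - W i‖ := abs_real_inner_le_norm _ _
        _ ≤ r * ‖W j - W i‖ := by
            exact mul_le_mul_of_nonneg_right (hr n) (norm_nonneg _)
    calc |Real.exp ⟪φ n, W j⟫ - Real.exp ⟪φ n, W i⟫| / ∑ l, Real.exp ⟪φ n, W l⟫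
        ≤ (max (Real.exp ⟪φ n, W j⟫) (Real.exp ⟪φ n, W i⟫) * |⟪φ n, W j⟫ - ⟪φ n, W i⟫|)
            / ∑ l, Real.exp ⟪φ n, W l⟫ := by
          gcongr
      _ = (max (Real.exp ⟪φ n, W j⟫) (Real.exp ⟪φ n, W i⟫) / ∑ l, Real.exp ⟪φ n, W l⟫)
            * |⟪φ n, W j⟫ - ⟪φ n, W i⟫| := by ring
      _ ≤ p * (r * ‖W j - W i‖) := by
          apply mul_le_mul hmax hinner (abs_nonneg _) hp0
  have hNpos : 0 < N := n0.pos
  have hterm : ∀ n : Fin N, ‖(softmaxProb W (φ n) j - softmaxProb W (φ n) i) • φ n‖ ≤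
      r ^ 2 * p * ‖W j - W i‖ := by
    intro n
    rw [norm_smul, Real.norm_eq_abs]
    calc |softmaxProb W (φ n) j - softmaxProb W (φ n) i| * ‖φ n‖
        ≤ (p * (r * ‖W j - W i‖)) * r := by
          apply mul_le_mul (key n) (hr n) (norm_nonneg _)
          positivity
      _ = r ^ 2 * p * ‖W j - W i‖ := by ring
  calc ‖(N : ℝ)⁻¹ • ∑ n, (softmaxProb W (φ n) j - softmaxProb W (φ n) i) • φ n‖
      = (N : ℝ)⁻¹ * ‖∑ n, (softmaxProb W (φ n) j - softmaxProb W (φ n) i) • φ n‖ := by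
        rw [norm_smul, Real.norm_eq_abs, abs_of_nonneg (by positivity)]
    _ ≤ (N : ℝ)⁻¹ * (N * (r ^ 2 * p * ‖W j - W i‖)) := by
        apply mul_le_mul_of_nonneg_left _ (by positivity)
        calc ‖∑ n, (softmaxProb W (φ n) j - softmaxProb W (φ n) i) • φ n‖
            ≤ ∑ n, ‖(softmaxProb W (φ n) j - softmaxProb W (φ n) i) • φ n‖ :=
              norm_sum_le _ _
          _ ≤ ∑ _n : Fin N, r ^ 2 * p * ‖W j - W i‖ :=
              Finset.sum_le_sum (fun n _ => hterm n)
          _ = N * (r ^ 2 * p * ‖W j - W i‖) := by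
              simp [Finset.sum_const, mul_comm]
    _ = r ^ 2 * p * ‖W j - W i‖ := by
        field_simp
end

section
/- Consider a softmax classifier over K classes: given a feature vector φ ∈ ℝ^d and weight rows W_1,…,W_K ∈ ℝ^d, the probability of class k is p(k | φ, W) = exp(φᵀW_k) / Σ_{l=1}^K exp(φᵀW_l). Fix a dataset of N examples with labels y_1,…,y_N and step-t features φ_n^t ∈ ℝ^d with ‖φ_n^t‖ ≤ r, and update the weights by W_k^{(t+1)} = W_k^{(t)} − η_t [ (1/N) Σ_{n=1}^N (p(k | φ_n^t, W^{(t)}) − 1[y_n = k]) φ_n^t + λ W_k^{(t)} ]. Suppose labels i and j satisfy y_n ≠ i and y_n ≠ j for all n, that 0 < η_t and λ η_t ≤ 1, that p_t := max over k ∈ {i, j} and n of p(k | φ_n^t, W^{(t)}) satisfies r² p_t < λ, and that W_j^{(t)} ≠ W_i^{(t)}. Then ‖W_j^{(t+1)} − W_i^{(t+1)}‖ < ‖W_j^{(t)} − W_i^{(t)}‖. -/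
open scoped RealInnerProductSpace BigOperators

/-- Lipschitz-type bound for the exponential on an interval. -/
lemma exp_sub_exp_abs_le (a b : ℝ) :
    |Real.exp b - Real.exp a| ≤ max (Real.exp a) (Real.exp b) * |b - a| := by
  rcases le_total a b with hab | hab
  · have h1 := Real.add_one_le_exp (a - b)
    have h2 : Real.exp b * Real.exp (a - b) = Real.exp a := by
      rw [← Real.exp_add]; ring_nf
    have hb := Real.exp_pos b
    have hmono : Real.exp a ≤ Real.exp b := Real.exp_le_exp.2 hab
    rw [abs_of_nonneg (by linarith), abs_of_nonneg (by linarith)]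
    calc Real.exp b - Real.exp a ≤ Real.exp b * (b - a) := by nlinarith
      _ ≤ max (Real.exp a) (Real.exp b) * (b - a) := by
          apply mul_le_mul_of_nonneg_right (le_max_right _ _) (by linarith)
  · have h1 := Real.add_one_le_exp (b - a)
    have h2 : Real.exp a * Real.exp (b - a) = Real.exp b := by
      rw [← Real.exp_add]; ring_nf
    have hb := Real.exp_pos a
    have hmono : Real.exp b ≤ Real.exp a := Real.exp_le_exp.2 hab
    rw [abs_of_nonpos (by linarith), abs_of_nonpos (by linarith), neg_sub, neg_sub]
    calc Real.exp a - Real.exp b ≤ Real.exp a * (a - b) := by nlinarith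
      _ ≤ max (Real.exp a) (Real.exp b) * (a - b) := by
          apply mul_le_mul_of_nonneg_right (le_max_left _ _) (by linarith)

/-- Strict-contraction consequence of Lemma 1: if `r² p_t < λ`, one ℓ2-regularized
gradient-descent step strictly decreases the distance between the weight rows of two
labels `i`, `j` that do not appear in the data. -/
theorem unseen_label_weight_strict_contraction
    {d K N : ℕ}
    (y : Fin N → Fin K)
    (φ : ℕ → Fin N → EuclideanSpace ℝ (Fin d))
    (r : ℝ) (hr : ∀ t n, ‖φ t n‖ ≤ r)
    (η : ℕ → ℝ)
    (lam : ℝ)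
    (W : ℕ → Fin K → EuclideanSpace ℝ (Fin d))
    (hupd : ∀ t k, W (t + 1) k =
      W t k - η t • ((N : ℝ)⁻¹ •
        ∑ n, (softmaxProb (W t) (φ t n) k - if y n = k then (1 : ℝ) else 0) • φ t n
        + lam • W t k))
    (i j : Fin K) (hi : ∀ n, y n ≠ i) (hj : ∀ n, y n ≠ j)
    (t : ℕ) (hη : 0 < η t) (hlamη : lam * η t ≤ 1)
    (pt : ℝ)
    (hpt : IsGreatest {x : ℝ | ∃ n : Fin N,
      x = softmaxProb (W t) (φ t n) i ∨ x = softmaxProb (W t) (φ t n) j} pt)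
    (hcontract : r ^ 2 * pt < lam)
    (hne : W t j ≠ W t i) :
    ‖W (t + 1) j - W (t + 1) i‖ < ‖W t j - W t i‖ := by
  obtain ⟨hmem, hub⟩ := hpt
  obtain ⟨n0, hn0⟩ := hmem
  have hNpos : 0 < (N : ℝ) := by exact_mod_cast n0.pos
  set Δ := W t j - W t i with hΔ
  have hΔpos : 0 < ‖Δ‖ := by
    rw [norm_pos_iff]
    exact sub_ne_zero.2 hne
  have hr0 : 0 ≤ r := le_trans (norm_nonneg _) (hr t n0)
  -- positivity of the softmax denominator and values
  have hZpos : ∀ v : EuclideanSpace ℝ (Fin d), 0 < ∑ l, Real.exp ⟪v, W t l⟫ := by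
    intro v
    exact Finset.sum_pos (fun l _ => Real.exp_pos _) ⟨i, Finset.mem_univ i⟩
  have hppos : ∀ (v : EuclideanSpace ℝ (Fin d)) (k : Fin K),
      0 < softmaxProb (W t) v k := fun v k => div_pos (Real.exp_pos _) (hZpos v)
  have hptpos : 0 < pt := by
    rcases hn0 with h | h <;> rw [h] <;> exact hppos _ _
  -- per-example bound on the probability difference
  have key : ∀ n : Fin N, |softmaxProb (W t) (φ t n) j - softmaxProb (W t) (φ t n) i|
      ≤ pt * (r * ‖Δ‖) := by
    intro n
    have hZ := hZpos (φ t n)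
    have hpi : softmaxProb (W t) (φ t n) i ≤ pt := hub ⟨n, Or.inl rfl⟩
    have hpj : softmaxProb (W t) (φ t n) j ≤ pt := hub ⟨n, Or.inr rfl⟩
    set a := ⟪φ t n, W t i⟫ with ha
    set b := ⟪φ t n, W t j⟫ with hb
    set Z := ∑ l, Real.exp ⟪φ t n, W t l⟫ with hZdef
    have heq : softmaxProb (W t) (φ t n) j - softmaxProb (W t) (φ t n) i
        = (Real.exp b - Real.exp a) / Z := by
      unfold softmaxProb
      rw [div_sub_div_same]
    have hexp := exp_sub_exp_abs_le a b
    have hmax : max (Real.exp a) (Real.exp b) / Z ≤ pt := by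
      rcases max_cases (Real.exp a) (Real.exp b) with ⟨hm, _⟩ | ⟨hm, _⟩
      · rw [hm]; exact hpi
      · rw [hm]; exact hpj
    have hba : |b - a| ≤ r * ‖Δ‖ := by
      have : b - a = ⟪φ t n, Δ⟫ := by
        rw [hΔ, inner_sub_right]
      rw [this]
      calc |⟪φ t n, Δ⟫| ≤ ‖φ t n‖ * ‖Δ‖ := abs_real_inner_le_norm _ _
        _ ≤ r * ‖Δ‖ := mul_le_mul_of_nonneg_right (hr t n) (norm_nonneg _)
    calc |softmaxProb (W t) (φ t n) j - softmaxProb (W t) (φ t n) i|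
        = |Real.exp b - Real.exp a| / Z := by rw [heq, abs_div, abs_of_pos hZ]
      _ ≤ (max (Real.exp a) (Real.exp b) * |b - a|) / Z := by gcongr
      _ = (max (Real.exp a) (Real.exp b) / Z) * |b - a| := by ring
      _ ≤ pt * (r * ‖Δ‖) := by
          apply mul_le_mul hmax hba (abs_nonneg _)
          exact le_of_lt hptpos
  -- decomposition of the updated difference
  set c : Fin N → ℝ := fun n =>
    softmaxProb (W t) (φ t n) j - softmaxProb (W t) (φ t n) i with hc
  have hdecomp : W (t + 1) j - W (t + 1) i
      = (1 - η t * lam) • Δ - (η t * (N : ℝ)⁻¹) • ∑ n, c n • φ t n := by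
    rw [hupd t j, hupd t i]
    have hsplit : ∑ n, c n • φ t n
        = (∑ n, (softmaxProb (W t) (φ t n) j - if y n = j then (1:ℝ) else 0) • φ t n)
          - ∑ n, (softmaxProb (W t) (φ t n) i - if y n = i then (1:ℝ) else 0) • φ t n := by
      rw [← Finset.sum_sub_distrib]
      apply Finset.sum_congr rfl
      intro n _
      rw [if_neg (hj n), if_neg (hi n), ← sub_smul]
      simp [hc]
    rw [hΔ, hsplit]
    module
  rw [hdecomp]
  -- bound the norm of the sum
  have hsum : ‖∑ n, c n • φ t n‖ ≤ (N : ℝ) * (pt * (r * ‖Δ‖) * r) := by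
    calc ‖∑ n, c n • φ t n‖ ≤ ∑ n, ‖c n • φ t n‖ := norm_sum_le _ _
      _ ≤ ∑ _n : Fin N, pt * (r * ‖Δ‖) * r := by
          apply Finset.sum_le_sum
          intro n _
          rw [norm_smul, Real.norm_eq_abs]
          calc |c n| * ‖φ t n‖ ≤ (pt * (r * ‖Δ‖)) * r := by
                apply mul_le_mul (key n) (hr t n) (norm_nonneg _)
                positivity
            _ = pt * (r * ‖Δ‖) * r := rfl
      _ = (N : ℝ) * (pt * (r * ‖Δ‖) * r) := by
          rw [Finset.sum_const, Finset.card_univ, Fintype.card_fin, nsmul_eq_mul]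
  have h1 : 0 ≤ 1 - η t * lam := by nlinarith
  calc ‖(1 - η t * lam) • Δ - (η t * (N : ℝ)⁻¹) • ∑ n, c n • φ t n‖
      ≤ ‖(1 - η t * lam) • Δ‖ + ‖(η t * (N : ℝ)⁻¹) • ∑ n, c n • φ t n‖ :=
        norm_sub_le _ _
    _ = (1 - η t * lam) * ‖Δ‖ + (η t * (N : ℝ)⁻¹) * ‖∑ n, c n • φ t n‖ := by
        rw [norm_smul, norm_smul, Real.norm_eq_abs, Real.norm_eq_abs,
          abs_of_nonneg h1, abs_of_nonneg (by positivity)]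
    _ ≤ (1 - η t * lam) * ‖Δ‖ + (η t * (N : ℝ)⁻¹) * ((N : ℝ) * (pt * (r * ‖Δ‖) * r)) := by
        have : 0 ≤ η t * (N : ℝ)⁻¹ := by positivity
        nlinarith [hsum]
    _ = (1 - η t * lam) * ‖Δ‖ + η t * (pt * r ^ 2 * ‖Δ‖) := by
        field_simp
    _ < ‖Δ‖ := by nlinarith [mul_pos hη hΔpos]
end

section
/- Consider a softmax classifier over K classes: given a feature vector φ ∈ ℝ^d and weight rows W_1,…,W_K ∈ ℝ^d, the probability of class k is p(k | φ, W) = exp(φᵀW_k) / Σ_{l=1}^K exp(φᵀW_l). Fix a dataset of N examples with labels y_1,…,y_N and, at each step t ≥ 0, features φ_n^t ∈ ℝ^d with ‖φ_n^t‖ ≤ r; update the weights by W_k^{(t+1)} = W_k^{(t)} − η_t [ (1/N) Σ_{n=1}^N (p(k | φ_n^t, W^{(t)}) − 1[y_n = k]) φ_n^t + λ W_k^{(t)} ]. Suppose labels i and j satisfy y_n ≠ i and y_n ≠ j for all n, and there exist constants η > 0 and p ≥ 0 such that for every step t: η ≤ η_t, λ η_t ≤ 1, r² p < λ, and max over k ∈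 {i, j} and n of p(k | φ_n^t, W^{(t)}) ≤ p. Then W_j^{(t)} − W_i^{(t)} → 0 as t → ∞; that is, the weights of the two unseen labels collapse to each other. -/
open scoped RealInnerProductSpace BigOperators

lemma exp_div_sub_le (S x y p : ℝ) (hS : 0 < S) (hx : Real.exp x / S ≤ p) (hy : y ≤ x) :
    Real.exp x / S - Real.exp y / S ≤ p * (x - y) := by
  have he : Real.exp x * Real.exp (y - x) = Real.exp y := by
    rw [← Real.exp_add]; ring_nf
  have h1 := Real.add_one_le_exp (y - x)
  have hex := Real.exp_pos x
  have h2 : Real.exp x - Real.exp y ≤ Real.exp x * (x - y) := by nlinarith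
  have h3 : Real.exp x / S - Real.exp y / S = (Real.exp x - Real.exp y) / S := by ring
  rw [h3, div_le_iff₀ hS]
  have h4 : Real.exp x ≤ p * S := (div_le_iff₀ hS).mp hx
  nlinarith [mul_le_mul_of_nonneg_right h4 (sub_nonneg.mpr hy)]

lemma abs_exp_div_sub_le (S x y p : ℝ) (hS : 0 < S)
    (hx : Real.exp x / S ≤ p) (hy : Real.exp y / S ≤ p) :
    |Real.exp x / S - Real.exp y / S| ≤ p * |x - y| := by
  rcases le_total y x with h | h
  · have hd : Real.exp y / S ≤ Real.exp x / S := by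
      gcongr
    rw [abs_of_nonneg (sub_nonneg.mpr hd), abs_of_nonneg (sub_nonneg.mpr h)]
    exact exp_div_sub_le S x y p hS hx h
  · have hd : Real.exp x / S ≤ Real.exp y / S := by
      gcongr
    rw [abs_sub_comm, abs_sub_comm x y,
      abs_of_nonneg (sub_nonneg.mpr hd), abs_of_nonneg (sub_nonneg.mpr h)]
    exact exp_div_sub_le S y x p hS hy h

/-- Asymptotic collapse (Section 4.1): under learning rates bounded away from zero and
uniformly small unseen-label probabilities, the distance between the weight rows of two
unseen labels tends to zero: the weights collapse to each other. -/
theorem unseen_label_weight_collapse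
    {d K N : ℕ}
    (y : Fin N → Fin K)
    (φ : ℕ → Fin N → EuclideanSpace ℝ (Fin d))
    (r : ℝ) (hr : ∀ t n, ‖φ t n‖ ≤ r)
    (η : ℕ → ℝ)
    (lam : ℝ)
    (W : ℕ → Fin K → EuclideanSpace ℝ (Fin d))
    (hupd : ∀ t k, W (t + 1) k =
      W t k - η t • ((N : ℝ)⁻¹ •
        ∑ n, (softmaxProb (W t) (φ t n) k - if y n = k then (1 : ℝ) else 0) • φ t n
        + lam • W t k))
    (i j : Fin K) (hi : ∀ n, y n ≠ i) (hj : ∀ n, y n ≠ j)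
    (ηlb : ℝ) (hηlb : 0 < ηlb)
    (p : ℝ) (hp : 0 ≤ p)
    (hη : ∀ t, ηlb ≤ η t)
    (hlamη : ∀ t, lam * η t ≤ 1)
    (hrp : r ^ 2 * p < lam)
    (hprob : ∀ t n, softmaxProb (W t) (φ t n) i ≤ p ∧ softmaxProb (W t) (φ t n) j ≤ p) :
    Filter.Tendsto (fun t => W t j - W t i) Filter.atTop (nhds 0) := by
  have hr2p : 0 ≤ r ^ 2 * p := mul_nonneg (sq_nonneg r) hp
  have hlam : 0 < lam := lt_of_le_of_lt hr2p hrp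
  set c : ℝ := 1 - ηlb * (lam - r ^ 2 * p) with hc
  have hc1 : c < 1 := by
    have : 0 < ηlb * (lam - r ^ 2 * p) := mul_pos hηlb (by linarith)
    simp [hc]; linarith
  have hc0 : 0 ≤ c := by
    have h0 := hη 0
    have h1 := hlamη 0
    have : ηlb * (lam - r ^ 2 * p) ≤ ηlb * lam := by nlinarith
    have h2 : ηlb * lam ≤ η 0 * lam := by nlinarith
    simp [hc]; nlinarith
  -- key step bound
  have key : ∀ t, ‖W (t + 1) j - W (t + 1) i‖ ≤ c * ‖W t j - W t i‖ := by
    intro t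
    set D := W t j - W t i with hD
    set S := ∑ n, (softmaxProb (W t) (φ t n) j - softmaxProb (W t) (φ t n) i) • φ t n with hS
    have hform : W (t + 1) j - W (t + 1) i
        = (1 - η t * lam) • D - (η t * (N : ℝ)⁻¹) • S := by
      rw [hupd t j, hupd t i]
      have e1 : ∀ n : Fin N, (softmaxProb (W t) (φ t n) j - if y n = j then (1 : ℝ) else 0)
          = softmaxProb (W t) (φ t n) j := fun n => by rw [if_neg (hj n)]; ring
      have e2 : ∀ n : Fin N, (softmaxProb (W t) (φ t n) i - if y n = i then (1 : ℝ) else 0)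
          = softmaxProb (W t) (φ t n) i := fun n => by rw [if_neg (hi n)]; ring
      simp only [e1, e2, hS, hD, sub_smul, Finset.sum_sub_distrib]
      module
    rw [hform]
    have hηt : 0 < η t := lt_of_lt_of_le hηlb (hη t)
    have hηlam : η t * lam ≤ 1 := by have := hlamη t; linarith [mul_comm lam (η t)]
    -- bound each summand
    have hterm : ∀ n : Fin N,
        ‖(softmaxProb (W t) (φ t n) j - softmaxProb (W t) (φ t n) i) • φ t n‖
          ≤ p * r ^ 2 * ‖D‖ := by
      intro n
      have hr0 : 0 ≤ r := le_trans (norm_nonneg _) (hr t n)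
      have hSpos : 0 < ∑ l, Real.exp ⟪φ t n, W t l⟫ :=
        Finset.sum_pos (fun l _ => Real.exp_pos _) ⟨i, Finset.mem_univ i⟩
      have habs : |softmaxProb (W t) (φ t n) j - softmaxProb (W t) (φ t n) i|
          ≤ p * |⟪φ t n, W t j⟫ - ⟪φ t n, W t i⟫| := by
        have := abs_exp_div_sub_le (∑ l, Real.exp ⟪φ t n, W t l⟫)
          ⟪φ t n, W t j⟫ ⟪φ t n, W t i⟫ p hSpos (hprob t n).2 (hprob t n).1
        simpa [softmaxProb] using this
      have hinner : |⟪φ t n, W t j⟫ - ⟪φ t n, W t i⟫| ≤ r * ‖D‖ := by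
        have : ⟪φ t n, W t j⟫ - ⟪φ t n, W t i⟫ = ⟪φ t n, D⟫ := by
          rw [hD, inner_sub_right]
        rw [this]
        calc |⟪φ t n, D⟫| ≤ ‖φ t n‖ * ‖D‖ := abs_real_inner_le_norm _ _
          _ ≤ r * ‖D‖ := by gcongr; exact hr t n
      rw [norm_smul]
      calc ‖softmaxProb (W t) (φ t n) j - softmaxProb (W t) (φ t n) i‖ * ‖φ t n‖
          ≤ (p * (r * ‖D‖)) * r := by
            apply mul_le_mul _ (hr t n) (norm_nonneg _)
              (by positivity)
            · rw [Real.norm_eq_abs]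
              exact habs.trans (by gcongr)
        _ = p * r ^ 2 * ‖D‖ := by ring
    have hSnorm : ‖S‖ ≤ (N : ℝ) * (p * r ^ 2 * ‖D‖) := by
      calc ‖S‖ ≤ ∑ n : Fin N, ‖(softmaxProb (W t) (φ t n) j - softmaxProb (W t) (φ t n) i) • φ t n‖ :=
            norm_sum_le _ _
        _ ≤ ∑ _n : Fin N, p * r ^ 2 * ‖D‖ := Finset.sum_le_sum (fun n _ => hterm n)
        _ = (N : ℝ) * (p * r ^ 2 * ‖D‖) := by simp [mul_comm]
    have hX : 0 ≤ p * r ^ 2 * ‖D‖ := by positivity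
    calc ‖(1 - η t * lam) • D - (η t * (N : ℝ)⁻¹) • S‖
        ≤ ‖(1 - η t * lam) • D‖ + ‖(η t * (N : ℝ)⁻¹) • S‖ := norm_sub_le _ _
      _ = (1 - η t * lam) * ‖D‖ + (η t * (N : ℝ)⁻¹) * ‖S‖ := by
          rw [norm_smul, norm_smul, Real.norm_eq_abs, Real.norm_eq_abs,
            abs_of_nonneg (by linarith), abs_of_nonneg (by positivity)]
      _ ≤ (1 - η t * lam) * ‖D‖ + (η t * (N : ℝ)⁻¹) * ((N : ℝ) * (p * r ^ 2 * ‖D‖)) := by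
          gcongr
      _ ≤ (1 - η t * lam) * ‖D‖ + η t * (p * r ^ 2 * ‖D‖) := by
          have hNN : (N : ℝ)⁻¹ * (N : ℝ) ≤ 1 := by
            rcases Nat.eq_zero_or_pos N with h | h
            · simp [h]
            · rw [inv_mul_cancel₀ (by positivity : (N : ℝ) ≠ 0)]
          have : (η t * (N : ℝ)⁻¹) * ((N : ℝ) * (p * r ^ 2 * ‖D‖))
              = η t * (((N : ℝ)⁻¹ * (N : ℝ)) * (p * r ^ 2 * ‖D‖)) := by ring
          rw [this]
          have h5 : ((N : ℝ)⁻¹ * (N : ℝ)) * (p * r ^ 2 * ‖D‖) ≤ p * r ^ 2 * ‖D‖ := by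
            nlinarith
          linarith [mul_le_mul_of_nonneg_left h5 hηt.le]
      _ = (1 - η t * (lam - r ^ 2 * p)) * ‖D‖ := by ring
      _ ≤ c * ‖D‖ := by
          apply mul_le_mul_of_nonneg_right _ (norm_nonneg _)
          have := hη t
          simp only [hc]
          nlinarith
  -- geometric decay
  have hgeo : ∀ t, ‖W t j - W t i‖ ≤ c ^ t * ‖W 0 j - W 0 i‖ := by
    intro t
    induction t with
    | zero => simp
    | succ t ih =>
        calc ‖W (t + 1) j - W (t + 1) i‖ ≤ c * ‖W t j - W t i‖ := key t
          _ ≤ c * (c ^ t * ‖W 0 j - W 0 i‖) := by gcongr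
          _ = c ^ (t + 1) * ‖W 0 j - W 0 i‖ := by ring
  apply squeeze_zero_norm hgeo
  have := (tendsto_pow_atTop_nhds_zero_of_lt_one hc0 hc1).mul_const ‖W 0 j - W 0 i‖
  simpa using this
end
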